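/- arXiv:1503.05806 — 3 statements merged into one kernel-verified Lean document; each statement's English description precedes it below -/
import Mathlib

section
/- Let (X, μ) be a σ-finite measure space, T_n : X → X measure-preserving transformations with D_n = {x : T_{n+1}(x) ≠ T_n(x)} measurable and ∑ μ(D_n) < ∞. If T(x) = lim T_n(x) exists almost everywhere and T is measurable, then T is measure preserving. -/
open MeasureTheory Set Filter Topology

/-- If the T_n are measure preserving, the sets where consecutive maps differ have
summable measure, and T is a measurable map agreeing a.e. eventually with the T_n
(the a.e. pointwise limit), then T is measure preserving. -/
theorem stmt_4 {X : Type*} [MeasurableSpace X] (μ : Measure X) [SigmaFinite μ]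
    (T : ℕ → X → X) (hT : ∀ n, MeasurePreserving (T n) μ μ)
    (hDm : ∀ n, MeasurableSet {x | T (n + 1) x ≠ T n x})
    (hsum : ∑' n, μ {x | T (n + 1) x ≠ T n x} < ⊤)
    (Tlim : X → X) (hTlimm : Measurable Tlim)
    (hlim : ∀ᵐ x ∂μ, ∃ N, ∀ m, N ≤ m → T m x = Tlim x) :
    ∀ B : Set X, MeasurableSet B → μ (Tlim ⁻¹' B) = μ B := by
  intro B hB
  set D : ℕ → Set X := fun n => {x | T (n + 1) x ≠ T n x} with hD
  set E : ℕ → Set X := fun N => ⋃ k, D (k + N) with hEdef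
  have hE : ∀ N, μ (E N) ≤ ∑' k, μ (D (k + N)) := fun N => measure_iUnion_le _
  have htail : Tendsto (fun N => ∑' k, μ (D (k + N))) atTop (𝓝 0) :=
    ENNReal.tendsto_sum_nat_add _ hsum.ne
  -- a.e., outside E N the limit equals T N
  have key : ∀ N, ∀ᵐ x ∂μ, x ∉ E N → Tlim x = T N x := by
    intro N
    filter_upwards [hlim] with x hx hxE
    obtain ⟨M, hM⟩ := hx
    have step : ∀ m, N ≤ m → T m x = T N x := by
      intro m hm
      induction m with
      | zero =>
        have : N = 0 := Nat.le_zero.mp hm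
        rw [this]
      | succ m ih =>
        rcases Nat.lt_or_ge N (m + 1) with h | h
        · have hm' : N ≤ m := Nat.lt_succ_iff.mp h
          have heq : T (m + 1) x = T m x := by
            by_contra hne
            exact hxE (mem_iUnion.mpr ⟨m - N, by
              rw [hD]; simp only [mem_setOf_eq]
              rwa [Nat.sub_add_cancel hm']⟩)
          rw [heq, ih hm']
        · have : m + 1 = N := le_antisymm h hm
          rw [this]
    have h1 := step (max N M) (le_max_left _ _)
    rw [← h1, hM _ (le_max_right _ _)]
  have hpreim : ∀ N, μ (T N ⁻¹' B) = μ B := fun N => (hT N).measure_preimage hB.nullMeasurableSet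
  have h1 : ∀ N, μ (Tlim ⁻¹' B) ≤ μ B + μ (E N) := by
    intro N
    have : μ (Tlim ⁻¹' B) ≤ μ (T N ⁻¹' B ∪ E N) := by
      apply measure_mono_ae
      filter_upwards [key N] with x hx hxB
      by_cases hxE : x ∈ E N
      · exact Or.inr hxE
      · left
        show T N x ∈ B
        rw [← hx hxE]; exact hxB
    calc μ (Tlim ⁻¹' B) ≤ μ (T N ⁻¹' B ∪ E N) := this
      _ ≤ μ (T N ⁻¹' B) + μ (E N) := measure_union_le _ _
      _ = μ B + μ (E N) := by rw [hpreim]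
  have h2 : ∀ N, μ B ≤ μ (Tlim ⁻¹' B) + μ (E N) := by
    intro N
    have : μ (T N ⁻¹' B) ≤ μ (Tlim ⁻¹' B ∪ E N) := by
      apply measure_mono_ae
      filter_upwards [key N] with x hx hxB
      by_cases hxE : x ∈ E N
      · exact Or.inr hxE
      · left
        show Tlim x ∈ B
        rw [hx hxE]; exact hxB
    calc μ B = μ (T N ⁻¹' B) := (hpreim N).symm
      _ ≤ μ (Tlim ⁻¹' B ∪ E N) := this
      _ ≤ μ (Tlim ⁻¹' B) + μ (E N) := measure_union_le _ _
  have hEtend : Tendsto (fun N => μ (E N)) atTop (𝓝 0) :=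
    tendsto_of_tendsto_of_tendsto_of_le_of_le tendsto_const_nhds htail
      (fun N => zero_le) hE
  have lim1 : Tendsto (fun N => μ B + μ (E N)) atTop (𝓝 (μ B)) := by
    have := Tendsto.const_add (μ B) hEtend
    simpa using this
  have lim2 : Tendsto (fun N => μ (Tlim ⁻¹' B) + μ (E N)) atTop (𝓝 (μ (Tlim ⁻¹' B))) := by
    have := Tendsto.const_add (μ (Tlim ⁻¹' B)) hEtend
    simpa using this
  exact le_antisymm (ge_of_tendsto' lim1 h1) (ge_of_tendsto' lim2 h2)
end

section
/- (Key Cauchy–Schwarz estimate.) Let T preserve μ, let Γ ⊆ {0, …, N−1} be nonempty, X' a set of finite positive measure, A ⊆ X' measurable, E ⊆ X' measurable, and suppose μ(E ∩ T^i A) − μ(E)μ(A)/μ(X') has constant sign for i ∈ Γ with T^i A ⊆ X' for all i ∈ Γ. Then (μ(X')/|Γ|) |∑_{i∈Γ} (μ(E ∩ T^i A) − μ(E)μ(A)/μ(X'))| ≤ [ (μ(X')²/|Γ|²) ∑_{i,j∈Γ} |μ(T^i A ∩ T^j A) − μ(A)²/μ(X')| ]^{1/2} · √(μ(E)). -/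
open MeasureTheory Set

lemma my_cs_stmt11 {Ω : Type*} [MeasurableSpace Ω] {μ : Measure Ω} {u v : Ω → ℝ}
    (hu : MemLp u 2 μ) (hv : MemLp v 2 μ) :
    |∫ x, u x * v x ∂μ| ≤
      Real.sqrt (∫ x, u x ^ 2 ∂μ) * Real.sqrt (∫ x, v x ^ 2 ∂μ) := by
  have hpq : Real.HolderConjugate 2 2 := ⟨by norm_num, by norm_num, by norm_num⟩
  have hu2 : MemLp u (ENNReal.ofReal 2) μ := by
    simpa [ENNReal.ofReal_ofNat] using hu
  have hv2 : MemLp v (ENNReal.ofReal 2) μ := by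
    simpa [ENNReal.ofReal_ofNat] using hv
  have h := integral_mul_norm_le_Lp_mul_Lq hpq hu2 hv2
  have h1 : |∫ x, u x * v x ∂μ| ≤ ∫ x, ‖u x‖ * ‖v x‖ ∂μ := by
    calc |∫ x, u x * v x ∂μ| ≤ ∫ x, ‖u x * v x‖ ∂μ := by
          simpa using norm_integral_le_integral_norm (fun x => u x * v x) (μ := μ)
      _ = ∫ x, ‖u x‖ * ‖v x‖ ∂μ := by simp [norm_mul]
  have e1 : ∀ (w : Ω → ℝ), (∫ x, ‖w x‖ ^ (2:ℝ) ∂μ) = ∫ x, w x ^ 2 ∂μ := fun w =>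
    integral_congr_ae (Filter.Eventually.of_forall fun x => by
      simp [Real.rpow_two, sq_abs])
  rw [e1, e1] at h
  have hnn : ∀ (w : Ω → ℝ), (∫ x, w x ^ 2 ∂μ) ^ ((1:ℝ)/2) = Real.sqrt (∫ x, w x ^ 2 ∂μ) := by
    intro w
    rw [Real.sqrt_eq_rpow]
  rw [hnn, hnn] at h
  exact h1.trans h

/-- Key Cauchy–Schwarz estimate: if the differences μ(E ∩ TⁱA) − μ(E)μ(A)/μ(X') have
constant sign over i ∈ Γ, then
(μ(X')/|Γ|)|∑_{i∈Γ}(μ(E ∩ TⁱA) − μ(E)μ(A)/μ(X'))| ≤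
[(μ(X')²/|Γ|²)∑_{i,j∈Γ}|μ(TⁱA ∩ TʲA) − μ(A)²/μ(X')|]^{1/2} √(μ(E)). -/
theorem stmt_11 {Ω : Type*} [MeasurableSpace Ω] (μ : Measure Ω)
    (T : Ω → Ω) (hT : MeasurePreserving T μ μ)
    (X' : Set Ω) (hX'm : MeasurableSet X') (hX'pos : 0 < μ X') (hX'fin : μ X' < ⊤)
    (A E : Set Ω) (hAm : MeasurableSet A) (hEm : MeasurableSet E)
    (hA : A ⊆ X') (hE : E ⊆ X')
    (Γ : Finset ℕ) (hΓ : Γ.Nonempty)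
    (hTA : ∀ i ∈ Γ, (T^[i]) ⁻¹' A ⊆ X')
    (hsign : (∀ i ∈ Γ, 0 ≤ (μ (E ∩ (T^[i]) ⁻¹' A)).toReal
                - (μ E).toReal * (μ A).toReal / (μ X').toReal) ∨
             (∀ i ∈ Γ, (μ (E ∩ (T^[i]) ⁻¹' A)).toReal
                - (μ E).toReal * (μ A).toReal / (μ X').toReal ≤ 0)) :
    ((μ X').toReal / (Γ.card : ℝ)) *
        |∑ i ∈ Γ, ((μ (E ∩ (T^[i]) ⁻¹' A)).toReal
            - (μ E).toReal * (μ A).toReal / (μ X').toReal)|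
      ≤ Real.sqrt (((μ X').toReal ^ 2 / (Γ.card : ℝ) ^ 2) *
          ∑ i ∈ Γ, ∑ j ∈ Γ,
            |(μ ((T^[i]) ⁻¹' A ∩ (T^[j]) ⁻¹' A)).toReal
              - (μ A).toReal ^ 2 / (μ X').toReal|) *
        Real.sqrt (μ E).toReal := by
  classical
  set x : ℝ := (μ X').toReal with hxdef
  set a : ℝ := (μ A).toReal with hadef
  set e : ℝ := (μ E).toReal with hedef
  have hX'fin' : μ X' ≠ ⊤ := hX'fin.ne
  have hxpos : 0 < x := ENNReal.toReal_pos hX'pos.ne' hX'fin'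
  set c : ℝ := a / x with hcdef
  set χ : Set Ω → Ω → ℝ := fun s => s.indicator 1 with hχdef
  have hSm : ∀ i : ℕ, MeasurableSet ((T^[i]) ⁻¹' A) := fun i =>
    (hT.iterate i).measurable hAm
  have hSμ : ∀ i : ℕ, μ ((T^[i]) ⁻¹' A) = μ A := fun i =>
    (hT.iterate i).measure_preimage hAm.nullMeasurableSet
  have hAfin : μ A ≠ ⊤ := ((measure_mono hA).trans_lt hX'fin).ne
  have hEfin : μ E ≠ ⊤ := ((measure_mono hE).trans_lt hX'fin).ne
  have hSfin : ∀ i : ℕ, μ ((T^[i]) ⁻¹' A) ≠ ⊤ := fun i => by rw [hSμ]; exact hAfin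
  -- basic facts about indicator functions
  have hmem : ∀ s : Set Ω, MeasurableSet s → μ s ≠ ⊤ → MemLp (χ s) 2 μ := fun s hs hf =>
    memLp_indicator_const 2 hs 1 (Or.inr hf)
  have hintg : ∀ s : Set Ω, MeasurableSet s → μ s ≠ ⊤ → Integrable (χ s) μ := by
    intro s hs hf
    rw [hχdef]
    exact (integrable_indicator_iff hs).2 (integrableOn_const hf)
  have hmul : ∀ (s t : Set Ω) (ω : Ω), χ s ω * χ t ω = χ (s ∩ t) ω := by
    intro s t ω
    simp only [hχdef, indicator]
    by_cases hs : ω ∈ s <;> by_cases ht : ω ∈ t <;> simp [hs, ht, mem_inter_iff]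
  have hind : ∀ s : Set Ω, MeasurableSet s → ∫ ω, χ s ω ∂μ = (μ s).toReal := fun s hs =>
    integral_indicator_one hs
  -- the functions
  set f : ℕ → Ω → ℝ := fun i ω => χ ((T^[i]) ⁻¹' A) ω - c * χ X' ω with hfdef
  set g : Ω → ℝ := fun ω => ∑ i ∈ Γ, f i ω with hgdef
  have hmemf : ∀ i : ℕ, MemLp (f i) 2 μ := fun i =>
    (hmem _ (hSm i) (hSfin i)).sub ((hmem X' hX'm hX'fin').const_mul c)
  have hmemg : MemLp g 2 μ := by
    have h := memLp_finset_sum' Γ (fun i hi => hmemf i)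
    rwa [show (∑ i ∈ Γ, f i) = g by funext ω; simp [hgdef]] at h
  have hEX : E ∩ X' = E := inter_eq_left.2 hE
  -- pointwise identities
  have hfE : ∀ i : ℕ, (fun ω => χ E ω * f i ω) =
      (fun ω => χ (E ∩ (T^[i]) ⁻¹' A) ω - c * χ E ω) := by
    intro i
    funext ω
    have h1 : χ E ω * f i ω = χ E ω * χ ((T^[i]) ⁻¹' A) ω - c * (χ E ω * χ X' ω) := by
      simp only [hfdef]; ring
    rw [h1, hmul, hmul, hEX]
  have hff : ∀ i ∈ Γ, ∀ j ∈ Γ, (fun ω => f i ω * f j ω) =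
      (fun ω => χ ((T^[i]) ⁻¹' A ∩ (T^[j]) ⁻¹' A) ω - c * χ ((T^[j]) ⁻¹' A) ω
        - c * χ ((T^[i]) ⁻¹' A) ω + c ^ 2 * χ X' ω) := by
    intro i hi j hj
    funext ω
    have h1 : f i ω * f j ω = χ ((T^[i]) ⁻¹' A) ω * χ ((T^[j]) ⁻¹' A) ω
        - c * (χ X' ω * χ ((T^[j]) ⁻¹' A) ω)
        - c * (χ ((T^[i]) ⁻¹' A) ω * χ X' ω)
        + c ^ 2 * (χ X' ω * χ X' ω) := by
      simp only [hfdef]; ring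
    rw [h1, hmul, hmul, hmul, hmul, inter_eq_right.2 (hTA j hj), inter_eq_left.2 (hTA i hi),
      inter_self]
  -- integrability
  have hiE : Integrable (χ E) μ := hintg E hEm hEfin
  have hiX : Integrable (χ X') μ := hintg X' hX'm hX'fin'
  have hiS : ∀ i : ℕ, Integrable (χ ((T^[i]) ⁻¹' A)) μ := fun i => hintg _ (hSm i) (hSfin i)
  have hiES : ∀ i : ℕ, Integrable (χ (E ∩ (T^[i]) ⁻¹' A)) μ := fun i =>
    hintg _ (hEm.inter (hSm i)) (((measure_mono inter_subset_left).trans_lt hEfin.lt_top).ne)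
  have hiSS : ∀ i j : ℕ, Integrable (χ ((T^[i]) ⁻¹' A ∩ (T^[j]) ⁻¹' A)) μ := fun i j =>
    hintg _ ((hSm i).inter (hSm j))
      (((measure_mono inter_subset_left).trans_lt (hSfin i).lt_top).ne)
  have hiEf : ∀ i ∈ Γ, Integrable (fun ω => χ E ω * f i ω) μ := by
    intro i _
    rw [hfE i]
    exact (hiES i).sub (hiE.const_mul c)
  have hiff : ∀ i ∈ Γ, ∀ j ∈ Γ, Integrable (fun ω => f i ω * f j ω) μ := by
    intro i hi j hj
    rw [hff i hi j hj]
    exact ((((hiSS i j).sub ((hiS j).const_mul c)).sub ((hiS i).const_mul c)).add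
      (hiX.const_mul (c ^ 2)))
  -- integral computations
  have IEf : ∀ i ∈ Γ, ∫ ω, χ E ω * f i ω ∂μ = (μ (E ∩ (T^[i]) ⁻¹' A)).toReal - e * a / x := by
    intro i _
    rw [hfE i, integral_sub (hiES i) (hiE.const_mul c), integral_const_mul,
      hind _ (hEm.inter (hSm i)), hind _ hEm, ← hedef, hcdef]
    ring
  have Iff : ∀ i ∈ Γ, ∀ j ∈ Γ, ∫ ω, f i ω * f j ω ∂μ =
      (μ ((T^[i]) ⁻¹' A ∩ (T^[j]) ⁻¹' A)).toReal - a ^ 2 / x := by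
    intro i hi j hj
    have h2 : Integrable (fun ω => c * χ ((T^[j]) ⁻¹' A) ω) μ := (hiS j).const_mul c
    have h3 : Integrable (fun ω => c * χ ((T^[i]) ⁻¹' A) ω) μ := (hiS i).const_mul c
    have h4 : Integrable (fun ω => c ^ 2 * χ X' ω) μ := hiX.const_mul (c ^ 2)
    have h12 : Integrable
        (fun ω => χ ((T^[i]) ⁻¹' A ∩ (T^[j]) ⁻¹' A) ω - c * χ ((T^[j]) ⁻¹' A) ω) μ :=
      (hiSS i j).sub h2
    have h123 : Integrable (fun ω => χ ((T^[i]) ⁻¹' A ∩ (T^[j]) ⁻¹' A) ω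
        - c * χ ((T^[j]) ⁻¹' A) ω - c * χ ((T^[i]) ⁻¹' A) ω) μ := h12.sub h3
    rw [hff i hi j hj, integral_add h123 h4, integral_sub h12 h3,
      integral_sub (hiSS i j) h2,
      integral_const_mul, integral_const_mul, integral_const_mul,
      hind _ ((hSm i).inter (hSm j)), hind _ (hSm i), hind _ (hSm j), hind _ hX'm,
      hSμ i, hSμ j, ← hadef, ← hxdef, hcdef]
    field_simp
    ring
  -- the two main integral identities
  have hSum1 : ∫ ω, χ E ω * g ω ∂μ =
      ∑ i ∈ Γ, ((μ (E ∩ (T^[i]) ⁻¹' A)).toReal - e * a / x) := by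
    have h1 : (fun ω => χ E ω * g ω) = fun ω => ∑ i ∈ Γ, χ E ω * f i ω := by
      funext ω; simp only [hgdef, Finset.mul_sum]
    rw [h1, integral_finset_sum _ hiEf]
    exact Finset.sum_congr rfl IEf
  have hSum2 : ∫ ω, g ω ^ 2 ∂μ =
      ∑ i ∈ Γ, ∑ j ∈ Γ, ((μ ((T^[i]) ⁻¹' A ∩ (T^[j]) ⁻¹' A)).toReal - a ^ 2 / x) := by
    have h1 : (fun ω => g ω ^ 2) = fun ω => ∑ i ∈ Γ, ∑ j ∈ Γ, f i ω * f j ω := by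
      funext ω
      simp only [hgdef, sq]
      rw [Finset.sum_mul_sum]
    rw [h1, integral_finset_sum _ (fun i hi => integrable_finset_sum _ (fun j hj => hiff i hi j hj))]
    refine Finset.sum_congr rfl fun i hi => ?_
    rw [integral_finset_sum _ (fun j hj => hiff i hi j hj)]
    exact Finset.sum_congr rfl fun j hj => Iff i hi j hj
  have hE2 : ∫ ω, χ E ω ^ 2 ∂μ = e := by
    have h1 : (fun ω => χ E ω ^ 2) = χ E := by
      funext ω; rw [sq, hmul, inter_self]
    rw [h1, hind _ hEm]
  -- Cauchy–Schwarz
  have hcs := my_cs_stmt11 (hmem E hEm hEfin) hmemg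
  rw [hSum1, hE2, hSum2] at hcs
  -- monotonicity of sqrt under termwise abs
  have hD0le : ∑ i ∈ Γ, ∑ j ∈ Γ, ((μ ((T^[i]) ⁻¹' A ∩ (T^[j]) ⁻¹' A)).toReal - a ^ 2 / x)
      ≤ ∑ i ∈ Γ, ∑ j ∈ Γ, |(μ ((T^[i]) ⁻¹' A ∩ (T^[j]) ⁻¹' A)).toReal - a ^ 2 / x| :=
    Finset.sum_le_sum fun i _ => Finset.sum_le_sum fun j _ => le_abs_self _
  set D : ℝ := ∑ i ∈ Γ, ∑ j ∈ Γ, |(μ ((T^[i]) ⁻¹' A ∩ (T^[j]) ⁻¹' A)).toReal - a ^ 2 / x|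
    with hDdef
  have hkey : |∑ i ∈ Γ, ((μ (E ∩ (T^[i]) ⁻¹' A)).toReal - e * a / x)|
      ≤ Real.sqrt D * Real.sqrt e := by
    refine hcs.trans ?_
    rw [mul_comm (Real.sqrt D)]
    exact mul_le_mul_of_nonneg_left (Real.sqrt_le_sqrt hD0le) (Real.sqrt_nonneg _)
  -- final arithmetic
  have hn : (0:ℝ) ≤ x / (Γ.card : ℝ) := div_nonneg hxpos.le (Nat.cast_nonneg _)
  have hsq : Real.sqrt (x ^ 2 / (Γ.card : ℝ) ^ 2 * D) = (x / (Γ.card : ℝ)) * Real.sqrt D := by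
    rw [show x ^ 2 / (Γ.card : ℝ) ^ 2 = (x / (Γ.card : ℝ)) ^ 2 by rw [div_pow],
      Real.sqrt_mul (sq_nonneg _), Real.sqrt_sq hn]
  calc x / (Γ.card : ℝ) * |∑ i ∈ Γ, ((μ (E ∩ (T^[i]) ⁻¹' A)).toReal - e * a / x)|
      ≤ x / (Γ.card : ℝ) * (Real.sqrt D * Real.sqrt e) :=
        mul_le_mul_of_nonneg_left hkey hn
    _ = Real.sqrt (x ^ 2 / (Γ.card : ℝ) ^ 2 * D) * Real.sqrt e := by rw [hsq]; ring
end

section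
/- (Extension to all measurable sets.) Suppose T is a measure-preserving transformation, X_n an increasing sequence of sets of finite positive measure with μ(X_n) → ∞, F = X_1 with μ(F) = 1, and P a collection of measurable subsets of F dense in the measure algebra of F. Assume that for all A, B ∈ P, lim_{n→∞} (μ(X_n)/N_n) ∑_{i=0}^{N_n−1} |μ(B ∩ T^i A) − μ(B)μ(A)/μ(X_n)| = 0, and also the one-sided extension: for all A ∈ P and all measurable E ⊆ F, lim_{n→∞} (μ(X_n)/N_n) ∑_{i=0}^{N_n−1} |μ(E ∩ T^i A) − μ(E)μ(A)/μ(X_n)| = 0. Then for all measurable D, E ⊆ F, lim_{n→∞} (μ(X_n)/N_n) ∑_{i=0}^{N_n−1} |μ(E ∩ T^i D) − μ(E)μ(D)/μ(X_n)| = 0. -/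
open MeasureTheory Set Filter


private lemma stmt_12_aux {Ω : Type*} [MeasurableSpace Ω] (μ : Measure Ω) {s t u : Set Ω}
    (h : s ⊆ t ∪ u) (ht : μ t ≠ ⊤) (hu : μ u ≠ ⊤) :
    (μ s).toReal ≤ (μ t).toReal + (μ u).toReal := by
  have h1 : μ s ≤ μ t + μ u := (measure_mono h).trans (measure_union_le t u)
  calc (μ s).toReal ≤ (μ t + μ u).toReal :=
        ENNReal.toReal_mono (by finiteness) h1
    _ = (μ t).toReal + (μ u).toReal := ENNReal.toReal_add ht hu

/-- Extension of the rational weak mixing limit condition from a dense collection P of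
subsets of F (together with its one-sided extension to arbitrary E ⊆ F) to all pairs
of measurable subsets of F. -/
theorem stmt_12 {Ω : Type*} [MeasurableSpace Ω] (μ : Measure Ω) [SigmaFinite μ]
    (T : Ω → Ω) (hT : MeasurePreserving T μ μ)
    (Xn : ℕ → Set Ω) (hXm : ∀ n, MeasurableSet (Xn n)) (hmono : Monotone Xn)
    (hXpos : ∀ n, 1 ≤ μ (Xn n)) (hXfin : ∀ n, μ (Xn n) < ⊤)
    (hXinf : Tendsto (fun n => μ (Xn n)) atTop (nhds ⊤))
    (F : Set Ω) (hFdef : F = Xn 1) (hFm : MeasurableSet F) (hF : μ F = 1)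
    (N : ℕ → ℕ) (hN : Tendsto N atTop atTop)
    (P : Set (Set Ω)) (hPmeas : ∀ A ∈ P, MeasurableSet A) (hPF : ∀ A ∈ P, A ⊆ F)
    (hPdense : ∀ D : Set Ω, MeasurableSet D → D ⊆ F → ∀ η : ℝ, 0 < η →
      ∃ A ∈ P, D ⊆ A ∧ (μ (symmDiff A D)).toReal < η)
    (hPP : ∀ A ∈ P, ∀ B ∈ P,
      Tendsto (fun n : ℕ =>
          ((μ (Xn n)).toReal / (N n : ℝ)) * ∑ i ∈ Finset.range (N n),
            |(μ (B ∩ (T^[i]) ⁻¹' A)).toReal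
              - (μ B).toReal * (μ A).toReal / (μ (Xn n)).toReal|)
        atTop (nhds 0))
    (hPE : ∀ A ∈ P, ∀ E : Set Ω, MeasurableSet E → E ⊆ F →
      Tendsto (fun n : ℕ =>
          ((μ (Xn n)).toReal / (N n : ℝ)) * ∑ i ∈ Finset.range (N n),
            |(μ (E ∩ (T^[i]) ⁻¹' A)).toReal
              - (μ E).toReal * (μ A).toReal / (μ (Xn n)).toReal|)
        atTop (nhds 0)) :
    ∀ D E : Set Ω, MeasurableSet D → MeasurableSet E → D ⊆ F → E ⊆ F →
      Tendsto (fun n : ℕ =>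
          ((μ (Xn n)).toReal / (N n : ℝ)) * ∑ i ∈ Finset.range (N n),
            |(μ (E ∩ (T^[i]) ⁻¹' D)).toReal
              - (μ E).toReal * (μ D).toReal / (μ (Xn n)).toReal|)
        atTop (nhds 0) := by
  intro D E hD hE hDF hEF
  have hFfin : μ F ≠ ⊤ := by rw [hF]; exact ENNReal.one_ne_top
  have hsub : ∀ S : Set Ω, S ⊆ F → μ S ≠ ⊤ := fun S hS =>
    ne_top_of_le_ne_top hFfin (measure_mono hS)
  have hsub1 : ∀ S : Set Ω, S ⊆ F → (μ S).toReal ≤ 1 := by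
    intro S hS
    have h1 : μ S ≤ 1 := hF ▸ measure_mono hS
    simpa using ENNReal.toReal_mono ENNReal.one_ne_top h1
  rw [NormedAddCommGroup.tendsto_nhds_zero]
  intro ε hε
  set η := ε / 6 with hηdef
  have hη : 0 < η := by positivity
  obtain ⟨A, hAP, hDA, hAD⟩ := hPdense D hD hDF η hη
  have hAF : A ⊆ F := hPF A hAP
  obtain ⟨B, hBP, hADB, hBd⟩ :=
    hPdense (A \ D) ((hPmeas A hAP).diff hD) (diff_subset.trans hAF) η hη
  have hBF : B ⊆ F := hPF B hBP
  have hAtend := hPE A hAP E hE hEF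
  have hBtend := hPE B hBP E hE hEF
  rw [NormedAddCommGroup.tendsto_nhds_zero] at hAtend hBtend
  filter_upwards [hAtend η hη, hBtend η hη, hN.eventually_ge_atTop 1] with n hA1 hB1 hNn
  -- notation
  set X : ℝ := (μ (Xn n)).toReal with hXdef
  have hX1 : (1:ℝ) ≤ X := by
    simpa using ENNReal.toReal_mono (hXfin n).ne (hXpos n)
  have hX0 : (0:ℝ) < X := lt_of_lt_of_le one_pos hX1
  have hNpos : (0:ℝ) < (N n : ℝ) := by exact_mod_cast Nat.lt_of_lt_of_le Nat.zero_lt_one hNn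
  -- measures of the relevant sets, as reals
  have hADsd : A \ D ⊆ symmDiff A D := by rw [Set.symmDiff_def]; exact subset_union_left
  have hADreal : (μ (A \ D)).toReal < η :=
    lt_of_le_of_lt (ENNReal.toReal_mono (hsub _ (symmDiff_subset_union.trans
      (union_subset hAF hDF))) (measure_mono hADsd)) hAD
  have hBreal : (μ B).toReal < 2 * η := by
    have h1 : B ⊆ (A \ D) ∪ symmDiff B (A \ D) := by
      intro x hx
      by_cases h : x ∈ A \ D
      · exact Or.inl h
      · exact Or.inr (by rw [Set.symmDiff_def]; exact Or.inl ⟨hx, h⟩)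
    have h2 := stmt_12_aux μ h1 (hsub _ (diff_subset.trans hAF))
      (hsub _ (symmDiff_subset_union.trans (union_subset hBF (diff_subset.trans hAF))))
    linarith
  have hAsubDU : (μ A).toReal ≤ (μ D).toReal + (μ (A \ D)).toReal :=
    stmt_12_aux μ (by rw [union_diff_cancel hDA]) (hsub _ hDF) (hsub _ (diff_subset.trans hAF))
  have hDArealle : (μ D).toReal ≤ (μ A).toReal :=
    ENNReal.toReal_mono (hsub _ hAF) (measure_mono hDA)
  have hE1 : (μ E).toReal ≤ 1 := hsub1 E hEF
  have hE0 : 0 ≤ (μ E).toReal := ENNReal.toReal_nonneg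
  -- pointwise bound
  have key : ∀ i : ℕ,
      |(μ (E ∩ (T^[i]) ⁻¹' D)).toReal - (μ E).toReal * (μ D).toReal / X| ≤
        |(μ (E ∩ (T^[i]) ⁻¹' A)).toReal - (μ E).toReal * (μ A).toReal / X|
        + |(μ (E ∩ (T^[i]) ⁻¹' B)).toReal - (μ E).toReal * (μ B).toReal / X|
        + ((μ E).toReal * (μ B).toReal / X
            + ((μ E).toReal * (μ A).toReal / X - (μ E).toReal * (μ D).toReal / X)) := by
    intro i
    set a := (μ (E ∩ (T^[i]) ⁻¹' D)).toReal
    set b := (μ (E ∩ (T^[i]) ⁻¹' A)).toReal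
    set c := (μ (E ∩ (T^[i]) ⁻¹' (A \ D))).toReal
    set d := (μ (E ∩ (T^[i]) ⁻¹' B)).toReal
    have hfin : ∀ S : Set Ω, μ (E ∩ (T^[i]) ⁻¹' S) ≠ ⊤ := fun S =>
      hsub _ (inter_subset_left.trans hEF)
    have hab : a ≤ b := ENNReal.toReal_mono (hfin A)
      (measure_mono (inter_subset_inter_right E (preimage_mono hDA)))
    have hbac : b ≤ a + c := by
      refine stmt_12_aux μ ?_ (hsub _ (inter_subset_left.trans hEF))
        (hsub _ (inter_subset_left.trans hEF))
      intro x ⟨hxE, hxA⟩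
      by_cases h : T^[i] x ∈ D
      · exact Or.inl ⟨hxE, h⟩
      · exact Or.inr ⟨hxE, hxA, h⟩
    have hcd : c ≤ d := ENNReal.toReal_mono (hfin B)
      (measure_mono (inter_subset_inter_right E (preimage_mono hADB)))
    have heDA : (μ E).toReal * (μ D).toReal / X ≤ (μ E).toReal * (μ A).toReal / X := by
      gcongr
    have heB : 0 ≤ (μ E).toReal * (μ B).toReal / X := by positivity
    have hb1 := le_abs_self (b - (μ E).toReal * (μ A).toReal / X)
    have hb2 := neg_abs_le (b - (μ E).toReal * (μ A).toReal / X)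
    have hd1 := le_abs_self (d - (μ E).toReal * (μ B).toReal / X)
    have hd2 := neg_abs_le (d - (μ E).toReal * (μ B).toReal / X)
    have hd0 := abs_nonneg (d - (μ E).toReal * (μ B).toReal / X)
    rw [abs_le]
    constructor <;> linarith
  -- sum the bound
  have sum_le : ∑ i ∈ Finset.range (N n),
      |(μ (E ∩ (T^[i]) ⁻¹' D)).toReal - (μ E).toReal * (μ D).toReal / X|
      ≤ (∑ i ∈ Finset.range (N n),
          |(μ (E ∩ (T^[i]) ⁻¹' A)).toReal - (μ E).toReal * (μ A).toReal / X|)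
        + (∑ i ∈ Finset.range (N n),
          |(μ (E ∩ (T^[i]) ⁻¹' B)).toReal - (μ E).toReal * (μ B).toReal / X|)
        + (N n : ℝ) * ((μ E).toReal * (μ B).toReal / X
            + ((μ E).toReal * (μ A).toReal / X - (μ E).toReal * (μ D).toReal / X)) := by
    calc ∑ i ∈ Finset.range (N n),
        |(μ (E ∩ (T^[i]) ⁻¹' D)).toReal - (μ E).toReal * (μ D).toReal / X|
        ≤ ∑ i ∈ Finset.range (N n),
          (|(μ (E ∩ (T^[i]) ⁻¹' A)).toReal - (μ E).toReal * (μ A).toReal / X|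
          + |(μ (E ∩ (T^[i]) ⁻¹' B)).toReal - (μ E).toReal * (μ B).toReal / X|
          + ((μ E).toReal * (μ B).toReal / X
            + ((μ E).toReal * (μ A).toReal / X - (μ E).toReal * (μ D).toReal / X))) :=
        Finset.sum_le_sum fun i _ => key i
      _ = _ := by
        rw [Finset.sum_add_distrib, Finset.sum_add_distrib, Finset.sum_const,
          Finset.card_range, nsmul_eq_mul]
  -- conclude
  have hfAnorm : X / (N n : ℝ) * ∑ i ∈ Finset.range (N n),
      |(μ (E ∩ (T^[i]) ⁻¹' A)).toReal - (μ E).toReal * (μ A).toReal / X| < η := by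
    have := hA1
    rw [Real.norm_eq_abs] at this
    exact lt_of_le_of_lt (le_abs_self _) this
  have hfBnorm : X / (N n : ℝ) * ∑ i ∈ Finset.range (N n),
      |(μ (E ∩ (T^[i]) ⁻¹' B)).toReal - (μ E).toReal * (μ B).toReal / X| < η := by
    have := hB1
    rw [Real.norm_eq_abs] at this
    exact lt_of_le_of_lt (le_abs_self _) this
  have hcancel : X / (N n : ℝ) * ((N n : ℝ) * ((μ E).toReal * (μ B).toReal / X
      + ((μ E).toReal * (μ A).toReal / X - (μ E).toReal * (μ D).toReal / X)))
      = (μ E).toReal * (μ B).toReal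
        + (μ E).toReal * ((μ A).toReal - (μ D).toReal) := by
    field_simp
  have hlast : (μ E).toReal * (μ B).toReal
      + (μ E).toReal * ((μ A).toReal - (μ D).toReal) ≤ 3 * η := by
    have hB0 : 0 ≤ (μ B).toReal := ENNReal.toReal_nonneg
    have hAD0 : 0 ≤ (μ A).toReal - (μ D).toReal := by linarith
    nlinarith [mul_le_of_le_one_left hB0 hE1, mul_le_of_le_one_left hAD0 hE1]
  have hmain : X / (N n : ℝ) * ∑ i ∈ Finset.range (N n),
      |(μ (E ∩ (T^[i]) ⁻¹' D)).toReal - (μ E).toReal * (μ D).toReal / X| < ε := by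
    have hXN : 0 ≤ X / (N n : ℝ) := by positivity
    have h1 := mul_le_mul_of_nonneg_left sum_le hXN
    rw [mul_add, mul_add, hcancel] at h1
    have : X / (N n : ℝ) * ∑ i ∈ Finset.range (N n),
        |(μ (E ∩ (T^[i]) ⁻¹' D)).toReal - (μ E).toReal * (μ D).toReal / X|
        < η + η + 3 * η := by linarith
    linarith [this]
  rw [Real.norm_eq_abs, abs_of_nonneg (by positivity :
    (0:ℝ) ≤ X / (N n : ℝ) * ∑ i ∈ Finset.range (N n),
      |(μ (E ∩ (T^[i]) ⁻¹' D)).toReal - (μ E).toReal * (μ D).toReal / X|)]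
  exact hmain
end
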